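/- For every ε with 0 < ε < 1/3 and every noiseless alternating binary protocol π of length n, there exists a deterministic robust interactive protocol Π with noiseless feedback over the binary alphabet {0,1} (whose order of speaking may depend on the noise, via the jointly known received bits), of length N ≤ c·n/ε² for an absolute constant c > 0, such that for every input pair (x,y) and every noise pattern with at most (1/3 − ε)·N corrupted rounds (bit flips), both parties output the transcript π(x,y). -/

import Mathlib

/-- A noiseless alternating binary protocol: Alice sends a bit in each odd round
(i.e., when the number of previously communicated bits is even) and Bob in each even
round, the bit being a fixed function of the sender's input and the past bits. -/
structure AltProtocol (X Y : Type) where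
  nextA : X → List Bool → Bool
  nextB : Y → List Bool → Bool

/-- The transcript of the first `n` rounds of the noiseless protocol on inputs `x, y`. -/
def AltProtocol.transcript {X Y : Type} (pr : AltProtocol X Y) (x : X) (y : Y) :
    ℕ → List Bool
  | 0 => []
  | n+1 =>
    let T := pr.transcript x y n
    T ++ [if T.length % 2 = 0 then pr.nextA x T else pr.nextB y T]

/-- A deterministic interactive protocol with noiseless feedback, of length `N` over
alphabet `Γ`: a speaker function on strings of received symbols (`true` = Alice),
next-symbol functions for each party (input and received symbols so far), and output
functions for each party (input and the full sequence of received symbols). -/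
structure FeedbackProtocol (Γ X Y O : Type) (N : ℕ) where
  ord : List Γ → Bool
  nextA : X → List Γ → Γ
  nextB : Y → List Γ → Γ
  outA : X → List Γ → O
  outB : Y → List Γ → O

/-- The symbol sent in round `i` of the execution with noise pattern `r`
(the received symbols): the speaker of round `i` is `ord` applied to the received
symbols so far, and it sends according to its next-symbol function. -/
def FeedbackProtocol.sent {Γ X Y O : Type} {N : ℕ} (P : FeedbackProtocol Γ X Y O N)
    (x : X) (y : Y) (r : Fin N → Γ) (i : Fin N) : Γ :=
  let h := (List.ofFn r).take i.val
  if P.ord h then P.nextA x h else P.nextB y h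

/-- The number of corrupted rounds: rounds where the sent symbol differs from the
received one. -/
def FeedbackProtocol.corruptions {Γ X Y O : Type} [DecidableEq Γ] {N : ℕ}
    (P : FeedbackProtocol Γ X Y O N) (x : X) (y : Y) (r : Fin N → Γ) : ℕ :=
  (Finset.univ.filter fun i : Fin N => P.sent x y r i ≠ r i).card

/-- The protocol has a fixed order of speaking if the speaker depends only on the
round number. -/
def FeedbackProtocol.FixedOrder {Γ X Y O : Type} {N : ℕ}
    (P : FeedbackProtocol Γ X Y O N) : Prop :=
  ∀ h h' : List Γ, h.length = h'.length → P.ord h = P.ord h'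

/-!
The parties simulate `π` on a stack `S` of bits, read bottom-up as a guess of the transcript.
`S` is a function of the received bits, so both parties know it, and the owner of the next
transcript bit speaks. It sends a two-bit command: push its next bit or, if it finds one of its
own bits in `S` wrong, pop two bits. A command takes effect only at the end of a confirmation
walk of about `6κ` bits, `κ ≈ 1/(3ε)`. The potential
`Φ = κ(6κ+2)·(|S| - 3·#incoherent entries) - deficit of the walk`
rises by at least `κ` in every uncorrupted round and drops by at most `2κ+1` in a corrupted one,
so at most `(1/3 - ε)N` corruptions leave `Φ ≥ 2N/3 - O(κ²)`. Above the lowest incoherent entry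
no two adjacent entries are coherent, so this forces the bottom `n` entries to be coherent,
that is, to be the transcript.
-/

namespace AltProtocol

variable {X Y : Type} (pr : AltProtocol X Y) (x : X) (y : Y)

theorem length_transcript (n : ℕ) : (pr.transcript x y n).length = n := by
  induction n with
  | zero => rfl
  | succ n ih => simp [transcript, ih]

theorem transcript_prefix_transcript {m n : ℕ} (h : m ≤ n) :
    pr.transcript x y m <+: pr.transcript x y n := by
  induction n, h using Nat.le_induction with
  | base => exact List.prefix_refl _
  | succ n _ ih => exact ih.trans (List.prefix_append _ _)

theorem take_transcript {m n : ℕ} (h : m ≤ n) :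
    (pr.transcript x y n).take m = pr.transcript x y m := by
  conv_lhs => rw [← length_transcript pr x y m]
  exact (List.prefix_iff_eq_take.mp (transcript_prefix_transcript pr x y h)).symm

end AltProtocol

namespace FeedbackSimulation

variable {X Y : Type} (pr : AltProtocol X Y) (x : X) (y : Y)

/-! Stacks are lists of bits, top first: the stack `S` stands for the transcript `S.reverse`,
and pushing onto `t` writes bit number `t.length`, which belongs to Alice iff it is even. -/

def consistentA : List Bool → Bool
  | [] => true
  | b :: t => consistentA t && (if t.length % 2 = 0 then b == pr.nextA x t.reverse else true)

def consistentB : List Bool → Bool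
  | [] => true
  | b :: t => consistentB t && (if t.length % 2 = 0 then true else b == pr.nextB y t.reverse)

def nextBit (t : List Bool) : Bool :=
  if t.length % 2 = 0 then pr.nextA x t.reverse else pr.nextB y t.reverse

def speakerConsistent (t : List Bool) : Bool :=
  if t.length % 2 = 0 then consistentA pr x t else consistentB pr y t

def coherent (t : List Bool) (b : Bool) : Bool :=
  speakerConsistent pr x y t && b == nextBit pr x y t

def coherenceFlags : List Bool → List Bool
  | [] => []
  | b :: t => coherent pr x y t b :: coherenceFlags t

def incoherence (S : List Bool) : ℕ :=
  (coherenceFlags pr x y S).count false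

def progress (S : List Bool) : ℤ :=
  S.length - 3 * incoherence pr x y S

variable {pr x y}

theorem length_coherenceFlags (S : List Bool) : (coherenceFlags pr x y S).length = S.length := by
  induction S with
  | nil => rfl
  | cons b t ih => simp [coherenceFlags, ih]

theorem coherenceFlags_drop (S : List Bool) (m : ℕ) :
    coherenceFlags pr x y (S.drop m) = (coherenceFlags pr x y S).drop m := by
  induction S generalizing m with
  | nil => simp [coherenceFlags]
  | cons b t ih => cases m <;> simp [coherenceFlags, ih]

theorem incoherence_cons (b : Bool) (t : List Bool) :
    incoherence pr x y (b :: t) = incoherence pr x y t + if coherent pr x y t b then 0 else 1 := by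
  cases h : coherent pr x y t b <;> simp [incoherence, coherenceFlags, h]

theorem incoherence_eq_zero_iff {S : List Bool} :
    incoherence pr x y S = 0 ↔ consistentA pr x S ∧ consistentB pr y S := by
  induction S with
  | nil => simp [incoherence, coherenceFlags, consistentA, consistentB]
  | cons b t ih =>
    rw [incoherence_cons, Nat.add_eq_zero_iff, ih]
    by_cases hp : t.length % 2 = 0 <;>
      simp only [coherent, speakerConsistent, nextBit, consistentA, consistentB, hp, ↓reduceIte,
        Bool.and_eq_true, Bool.and_true, beq_iff_eq, ite_eq_left_iff, one_ne_zero, imp_false,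
        not_not] <;> tauto

/-- Consecutive pushes come from different parties, so two coherent entries on top of each
other certify both parties' consistency with the whole stack. -/
theorem incoherence_eq_zero_of_coherent_of_coherent {S : List Bool} {c b : Bool}
    (hc : coherent pr x y S c) (hb : coherent pr x y (c :: S) b) :
    incoherence pr x y (c :: S) = 0 := by
  rw [incoherence_eq_zero_iff]
  have hp : (c :: S).length % 2 = 0 ↔ ¬ S.length % 2 = 0 := by simp only [List.length_cons]; omega
  by_cases hS : S.length % 2 = 0 <;>
    simp_all [coherent, speakerConsistent, nextBit, consistentA, consistentB]

theorem reverse_eq_transcript_of_incoherence_eq_zero {S : List Bool}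
    (h : incoherence pr x y S = 0) : S.reverse = pr.transcript x y S.length := by
  induction S with
  | nil => rfl
  | cons b t ih =>
    rw [incoherence_cons, Nat.add_eq_zero_iff] at h
    have hb : b = nextBit pr x y t := by
      cases hc : coherent pr x y t b <;> simp_all [coherent]
    simp [AltProtocol.transcript, ← ih h.1, hb, nextBit]

theorem speakerConsistent_of_length_le_one {S : List Bool} (h : S.length ≤ 1) :
    speakerConsistent pr x y S := by
  match S, h with
  | [], _ => rfl
  | [_], _ => simp [speakerConsistent, consistentB]

/-- Commands are sent as two bits: `(false, b)` pushes `b`, `(true, false)` pops two entries and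
`(true, true)` does nothing. -/
abbrev Command := Bool × Bool

def applyCommand : Command → List Bool → List Bool
  | (false, b), S => b :: S
  | (true, false), S => S.drop 2
  | (true, true), S => S

variable (pr x y) in
def target (S : List Bool) : Command :=
  if speakerConsistent pr x y S then (false, nextBit pr x y S) else (true, false)

theorem count_false_le_count_false_drop_add (l : List Bool) (m : ℕ) :
    l.count false ≤ (l.drop m).count false + m := by
  conv_lhs => rw [← List.take_append_drop m l]
  rw [List.count_append]
  have := (List.count_le_length (a := false) (l := l.take m)).trans (List.length_take_le m l)
  omega

variable (pr x y) in
theorem progress_applyCommand_ge (p : Command) (S : List Bool) :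
    progress pr x y S - 2 ≤ progress pr x y (applyCommand p S) := by
  rcases p with ⟨_ | _, b⟩
  · simp only [applyCommand, progress, incoherence_cons, List.length_cons]
    split_ifs <;> push_cast <;> omega
  cases b
  · have hle := count_false_le_count_false_drop_add (coherenceFlags pr x y S) 2
    have hge := (List.drop_sublist 2 (coherenceFlags pr x y S)).count_le false
    simp only [applyCommand, progress, incoherence, coherenceFlags_drop, List.length_drop]
      at hle hge ⊢
    omega
  · simp [applyCommand]

variable (pr x y) in
theorem progress_applyCommand_target (S : List Bool) :
    progress pr x y S + 1 ≤ progress pr x y (applyCommand (target pr x y S) S) := by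
  unfold target
  split_ifs with hS
  · have : coherent pr x y S (nextBit pr x y S) := by simp [coherent, hS]
    simp only [applyCommand, progress, incoherence_cons, this, List.length_cons]
    push_cast; omega
  · match S, hS with
    | [], hS | [_], hS => exact absurd (speakerConsistent_of_length_le_one (by simp)) hS
    | c :: d :: S, hS =>
      have hnot : ¬ (coherent pr x y S d ∧ coherent pr x y (d :: S) c) := by
        rintro ⟨hd, hc⟩
        have h0 : incoherence pr x y (c :: d :: S) = 0 := by
          rw [incoherence_cons, incoherence_eq_zero_of_coherent_of_coherent hd hc, if_pos hc]
        obtain ⟨hA, hB⟩ := incoherence_eq_zero_iff.mp h0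
        exact hS (by unfold speakerConsistent; split_ifs <;> assumption)
      simp only [applyCommand, progress, incoherence_cons, List.length_cons, List.drop_succ_cons,
        List.drop_zero]
      split_ifs <;> push_cast <;> first | omega | exact absurd ⟨‹_›, ‹_›⟩ hnot

theorem length_le_two_mul_count_false_add_one :
    ∀ {u : List Bool}, u.IsChain (fun a b => a = false ∨ b = false) →
      u.length ≤ 2 * u.count false + 1
  | [], _ | [_], _ => by simp
  | false :: v, h => by
    have := length_le_two_mul_count_false_add_one (List.isChain_cons.mp h).2
    simp only [List.length_cons, List.count_cons_self]
    omega
  | true :: c :: v, h => by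
    obtain ⟨hc, hv⟩ := List.isChain_cons_cons.mp h
    obtain rfl : c = false := by simpa using hc
    have := length_le_two_mul_count_false_add_one hv.tail
    simp only [List.tail_cons, List.length_cons, List.count_cons_self,
      List.count_cons_of_ne (by decide : true ≠ false)] at this ⊢
    omega

variable (pr x y) in
def FlagShape (S : List Bool) : Prop :=
  ∃ u t, coherenceFlags pr x y S = u ++ t ∧ false ∉ t ∧
    u.IsChain (fun a b => a = false ∨ b = false)

theorem flagShape_nil : FlagShape pr x y [] :=
  ⟨[], [], rfl, by simp, List.isChain_nil⟩

theorem FlagShape.cons {S : List Bool} (hS : FlagShape pr x y S) (b : Bool) :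
    FlagShape pr x y (b :: S) := by
  obtain ⟨u, t, hfl, ht, hu⟩ := hS
  by_cases hclean : incoherence pr x y (b :: S) = 0
  · exact ⟨[], _, rfl, List.count_eq_zero.mp hclean, List.isChain_nil⟩
  cases hb : coherent pr x y S b
  · exact ⟨false :: u, t, by simp [coherenceFlags, hb, hfl], ht,
      List.isChain_cons.mpr ⟨fun _ _ => Or.inl rfl, hu⟩⟩
  have hS : incoherence pr x y S ≠ 0 := by simpa [incoherence_cons, hb] using hclean
  rcases S with _ | ⟨c, S₀⟩
  · simp [incoherence, coherenceFlags] at hS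
  rcases u with _ | ⟨h, u₀⟩
  · simp [incoherence, hfl, List.count_eq_zero.mpr ht] at hS
  have hc : coherent pr x y S₀ c = false := by
    by_contra hc
    exact hclean (by rw [incoherence_cons, if_pos hb,
      incoherence_eq_zero_of_coherent_of_coherent (by simpa using hc) hb])
  have hh : h = false := by
    simp only [coherenceFlags, List.cons_append, List.cons.injEq] at hfl
    rw [← hfl.1, hc]
  exact ⟨true :: h :: u₀, t, by simp [coherenceFlags, hb, ← hfl], ht,
    List.isChain_cons_cons.mpr ⟨Or.inr hh, hu⟩⟩

theorem FlagShape.drop {S : List Bool} (hS : FlagShape pr x y S) (m : ℕ) :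
    FlagShape pr x y (S.drop m) := by
  obtain ⟨u, t, hfl, ht, hu⟩ := hS
  exact ⟨u.drop m, t.drop (m - u.length), by rw [coherenceFlags_drop, hfl, List.drop_append],
    fun h => ht (List.mem_of_mem_drop h), hu.drop m⟩

theorem FlagShape.applyCommand {S : List Bool} (hS : FlagShape pr x y S) (p : Command) :
    FlagShape pr x y (applyCommand p S) := by
  rcases p with ⟨_ | _, _ | _⟩
  exacts [hS.cons _, hS.cons _, hS.drop 2, hS]

theorem FlagShape.take_reverse_eq_transcript {S : List Bool} (hS : FlagShape pr x y S) {n : ℕ}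
    (hn : n + 1 ≤ progress pr x y S) : S.reverse.take n = pr.transcript x y n := by
  obtain ⟨u, t, hfl, ht, hu⟩ := hS
  have hcount : incoherence pr x y S = u.count false := by
    rw [incoherence, hfl, List.count_append, List.count_eq_zero.mpr ht, Nat.add_zero]
  have hbottom : incoherence pr x y (S.drop u.length) = 0 := by
    rw [incoherence, coherenceFlags_drop, hfl, List.drop_left, List.count_eq_zero.mpr ht]
  have hlen : u.length ≤ S.length := by
    rw [← length_coherenceFlags (pr := pr) (x := x) (y := y) S, hfl, List.length_append]
    omega
  have hnle : n ≤ (S.drop u.length).length := by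
    have := length_le_two_mul_count_false_add_one hu
    rw [progress, hcount] at hn
    rw [List.length_drop]
    omega
  calc S.reverse.take n
      = ((S.drop u.length).reverse ++ (S.take u.length).reverse).take n := by
        rw [← List.reverse_append, List.take_append_drop]
    _ = (S.drop u.length).reverse.take n :=
        List.take_append_of_le_length (by simpa using hnle)
    _ = pr.transcript x y n := by
        rw [reverse_eq_transcript_of_incoherence_eq_zero hbottom,
          AltProtocol.take_transcript _ _ _ hnle]

/-- Position in the walk through which the next command is transmitted: after the two bits
`p` of a command the walk enters the ray of `p`, and the command takes effect once `6κ - 1`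
more steps outward have been taken. -/
inductive Node where
  | root
  | first (m : Bool)
  | ray (p : Command) (d : ℕ)

namespace Node

variable (κ : ℕ)

def InRange : Node → Prop
  | ray _ d => 1 ≤ d ∧ d + 1 ≤ 6 * κ
  | _ => True

def next : Node → Bool → Node
  | root, b => first b
  | first m, b => ray (m, b) 1
  | ray p d, true => if d + 1 < 6 * κ then ray p (d + 1) else root
  | ray p d, false => if d ≤ 1 then root else ray p (d - 1)

def committed : Node → Bool → Option Command
  | ray p d, true => if d + 1 < 6 * κ then none else some p
  | _, _ => none

def toward : Node → Command → Bool
  | root, a => a.1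
  | first _, a => a.2
  | ray p _, a => p == a

/-- `κ` times the number of bits still needed to commit `a`, plus, on a wrong ray, a surcharge
`(κ + 1)(d - 1)` that prepays the progress lost if the wrong command gets committed. -/
def deficit : Node → Command → ℤ
  | root, _ => κ * (6 * κ + 1)
  | first m, a => if m = a.1 then κ * (6 * κ) else κ * (6 * κ + 3)
  | ray p d, a => if p = a then κ * (6 * κ - d) else κ * (6 * κ + 1 + d) + (κ + 1) * (d - 1)

variable {κ}

theorem InRange.next (hκ : 1 ≤ κ) {w : Node} (hw : w.InRange κ) (b : Bool) :
    (w.next κ b).InRange κ := by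
  rcases w with _ | _ | ⟨p, d⟩ <;> cases b <;> simp only [Node.next] <;> (try split_ifs) <;>
    simp only [InRange] at hw ⊢ <;> omega

theorem deficit_nonneg {w : Node} (hw : w.InRange κ) (a : Command) : 0 ≤ w.deficit κ a := by
  rcases w with _ | _ | ⟨p, d⟩
  · simp only [deficit]; positivity
  · simp only [deficit]; split_ifs <;> positivity
  · have hd : (1 : ℤ) ≤ d ∧ (d : ℤ) + 1 ≤ 6 * κ := by exact_mod_cast hw
    simp only [deficit]; split_ifs <;> nlinarith

theorem deficit_next_add_le {w : Node} (hw : w.InRange κ) {b : Bool}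
    (hb : w.committed κ b = none) (a : Command) :
    (w.next κ b).deficit κ a + κ ≤
      w.deficit κ a + (3 * κ + 1) * if b = w.toward a then 0 else 1 := by
  rcases w with _ | _ | ⟨p, d⟩ <;> cases b <;>
    simp only [InRange, Node.next, committed, deficit, toward] at hw hb ⊢ <;>
    split_ifs <;> simp_all <;> nlinarith

theorem committed_eq_some {w : Node} (hw : w.InRange κ) {b : Bool} {p : Command}
    (h : w.committed κ b = some p) : w = ray p (6 * κ - 1) ∧ b = true := by
  rcases w with _ | _ | ⟨q, d⟩ <;> cases b <;>
    simp only [committed, reduceCtorEq, Option.ite_none_left_eq_some, not_lt, Option.some.injEq]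
      at h
  obtain ⟨hd, rfl⟩ := h
  simp only [InRange] at hw
  exact ⟨by rw [show d = 6 * κ - 1 by omega], rfl⟩

end Node

abbrev State := List Bool × Node

def receive (κ : ℕ) (st : State) (b : Bool) : State :=
  ((st.2.committed κ b).elim st.1 (applyCommand · st.1), st.2.next κ b)

def stateOf (κ : ℕ) (h : List Bool) : State :=
  h.foldl (receive κ) ([], .root)

variable (pr x y) in
def honestBit (st : State) : Bool :=
  st.2.toward (target pr x y st.1)

def amp (κ : ℕ) : ℤ :=
  κ * (6 * κ + 2)

variable (pr x y) in
def potential (κ : ℕ) (st : State) : ℤ :=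
  amp κ * progress pr x y st.1 - st.2.deficit κ (target pr x y st.1)

theorem potential_nil (κ : ℕ) : potential pr x y κ ([], .root) = -(κ * (6 * κ + 1)) := by
  simp [potential, progress, incoherence, coherenceFlags, Node.deficit]

theorem potential_receive {κ : ℕ} (hκ : 1 ≤ κ) {st : State} (hw : st.2.InRange κ) (b : Bool) :
    potential pr x y κ st + κ - (3 * κ + 1) * (if b = honestBit pr x y st then 0 else 1) ≤
      potential pr x y κ (receive κ st b) := by
  obtain ⟨S, w⟩ := st
  dsimp only at hw ⊢
  cases hc : w.committed κ b with
  | none =>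
    have := Node.deficit_next_add_le hw hc (target pr x y S)
    rw [show honestBit pr x y (S, w) = w.toward (target pr x y S) from rfl]
    simp only [potential, receive, hc, Option.elim]
    linarith
  | some p =>
    obtain ⟨rfl, rfl⟩ := Node.committed_eq_some hw hc
    have hnext : (Node.ray p (6 * κ - 1)).next κ true = .root := by
      rw [Node.next, if_neg (by omega)]
    have hd : ((6 * κ - 1 : ℕ) : ℤ) = 6 * κ - 1 := by omega
    have hamp : 0 ≤ amp κ := by unfold amp; positivity
    simp only [potential, receive, hc, hnext, honestBit, Option.elim, Node.deficit, Node.toward,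
      hd]
    by_cases hp : p = target pr x y S
    · subst hp
      have := mul_le_mul_of_nonneg_left (progress_applyCommand_target pr x y S) hamp
      simp only [amp, beq_self_eq_true, if_true] at this ⊢
      nlinarith
    · have := mul_le_mul_of_nonneg_left (progress_applyCommand_ge pr x y p S) hamp
      have hκ' : (1 : ℤ) ≤ κ := by exact_mod_cast hκ
      simp only [amp, hp, beq_false_of_ne hp, Bool.true_eq_false, if_false] at this ⊢
      nlinarith

theorem flagShape_receive {κ : ℕ} {st : State} (hS : FlagShape pr x y st.1) (b : Bool) :
    FlagShape pr x y (receive κ st b).1 := by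
  simp only [receive]
  cases st.2.committed κ b
  exacts [hS, hS.applyCommand _]

theorem flagShape_foldl_receive {κ : ℕ} (l : List Bool) {st : State} (hS : FlagShape pr x y st.1) :
    FlagShape pr x y (l.foldl (receive κ) st).1 := by
  induction l generalizing st with
  | nil => exact hS
  | cons b l ih => exact ih (flagShape_receive hS b)

theorem inRange_foldl_receive {κ : ℕ} (hκ : 1 ≤ κ) (l : List Bool) {st : State}
    (hw : st.2.InRange κ) : (l.foldl (receive κ) st).2.InRange κ := by
  induction l generalizing st with
  | nil => exact hw
  | cons b l ih => exact ih (st := receive κ st b) (hw.next hκ b)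

variable (pr x y) in
def errors (κ : ℕ) : State → List Bool → ℕ
  | _, [] => 0
  | st, b :: l => (if b = honestBit pr x y st then 0 else 1) + errors κ (receive κ st b) l

theorem potential_foldl_receive {κ : ℕ} (hκ : 1 ≤ κ) (l : List Bool) {st : State}
    (hw : st.2.InRange κ) :
    potential pr x y κ st + κ * l.length - (3 * κ + 1) * errors pr x y κ st l ≤
      potential pr x y κ (l.foldl (receive κ) st) := by
  induction l generalizing st with
  | nil => simp [errors]
  | cons b l ih =>
    have h₁ := potential_receive (pr := pr) (x := x) (y := y) hκ hw b
    have h₂ := ih (st := receive κ st b) (hw.next hκ b)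
    simp only [errors, List.length_cons, List.foldl_cons] at h₂ ⊢
    push_cast at h₁ h₂ ⊢
    linarith

theorem errors_ofFn {κ N : ℕ} (st : State) (r : Fin N → Bool) :
    errors pr x y κ st (List.ofFn r) =
      (Finset.univ.filter fun i : Fin N =>
        honestBit pr x y (((List.ofFn r).take i.val).foldl (receive κ) st) ≠ r i).card := by
  induction N generalizing st with
  | zero => simp [errors]
  | succ N ih =>
    rw [List.ofFn_succ, errors, ih, Finset.card_filter, Finset.card_filter, Fin.sum_univ_succ]
    simp only [List.take_succ_cons, List.foldl_cons, Fin.val_succ, Fin.val_zero, List.take_zero,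
      List.foldl_nil, ne_eq, ite_not, @eq_comm _ (honestBit _ _ _ _)]

variable (pr) in
def simProtocol (n κ N : ℕ) : FeedbackProtocol Bool X Y (List Bool) N where
  ord h := (stateOf κ h).1.length % 2 == 0
  nextA x h := let st := stateOf κ h
    st.2.toward (if consistentA pr x st.1 then (false, pr.nextA x st.1.reverse) else (true, false))
  nextB y h := let st := stateOf κ h
    st.2.toward (if consistentB pr y st.1 then (false, pr.nextB y st.1.reverse) else (true, false))
  outA _ h := (stateOf κ h).1.reverse.take n
  outB _ h := (stateOf κ h).1.reverse.take n

theorem simProtocol_sent {n κ N : ℕ} (r : Fin N → Bool) (i : Fin N) :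
    (simProtocol pr n κ N).sent x y r i =
      honestBit pr x y (stateOf κ ((List.ofFn r).take i.val)) := by
  simp only [FeedbackProtocol.sent, simProtocol, honestBit, target, speakerConsistent, nextBit]
  split_ifs <;> simp_all

theorem simProtocol_corruptions {n κ N : ℕ} (r : Fin N → Bool) :
    (simProtocol pr n κ N).corruptions x y r = errors pr x y κ ([], .root) (List.ofFn r) := by
  simp only [FeedbackProtocol.corruptions, simProtocol_sent, errors_ofFn, stateOf]

theorem two_mul_length_le_progress_stateOf {κ : ℕ} (hκ : 1 ≤ κ) (l : List Bool)
    (hl : 3 * (3 * κ + 1) * (errors pr x y κ ([], .root) l : ℤ) ≤ (3 * κ - 2) * l.length) :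
    2 * l.length ≤ 3 * (amp κ * progress pr x y (stateOf κ l).1 + κ * (6 * κ + 1)) := by
  have hrun : _ ≤ potential pr x y κ (stateOf κ l) :=
    potential_foldl_receive hκ l (st := ([], .root)) trivial
  have hdeficit : 0 ≤ (stateOf κ l).2.deficit κ (target pr x y (stateOf κ l).1) :=
    Node.deficit_nonneg (inRange_foldl_receive hκ l (st := ([], .root)) trivial) _
  rw [potential_nil, potential] at hrun
  linarith

def simLength (κ n : ℕ) : ℕ :=
  6 * (κ * (6 * κ + 2)) * n

theorem simProtocol_output {n κ : ℕ} (hκ : 1 ≤ κ) {ε : ℝ} (hε : 0 < ε) (hκε : 1 ≤ 3 * κ * ε)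
    (r : Fin (simLength κ n) → Bool)
    (hr : ((simProtocol pr n κ _).corruptions x y r : ℝ) ≤ (1 / 3 - ε) * simLength κ n) :
    (stateOf κ (List.ofFn r)).1.reverse.take n = pr.transcript x y n := by
  rcases Nat.eq_zero_or_pos n with rfl | hn
  · rfl
  have hbudget : 3 * (3 * κ + 1) * ((simProtocol pr n κ _).corruptions x y r : ℤ) ≤
      (3 * κ - 2) * simLength κ n := by
    have hN : (0 : ℝ) ≤ simLength κ n := by positivity
    have : (3 * (3 * κ + 1) * (simProtocol pr n κ _).corruptions x y r : ℝ) ≤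
        (3 * κ - 2) * simLength κ n := by
      nlinarith [mul_le_mul_of_nonneg_left hr (by positivity : (0 : ℝ) ≤ 3 * (3 * κ + 1)),
        mul_le_mul_of_nonneg_right hκε hN, mul_nonneg hε.le hN]
    exact_mod_cast this
  rw [simProtocol_corruptions] at hbudget
  have hΦ := two_mul_length_le_progress_stateOf hκ (List.ofFn r) (by rwa [List.length_ofFn])
  rw [List.length_ofFn] at hΦ
  have hprogress : (4 * n : ℤ) ≤ progress pr x y (stateOf κ (List.ofFn r)).1 := by
    by_contra h
    have hamp : 0 ≤ amp κ := by unfold amp; positivity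
    have := mul_le_mul_of_nonneg_left
      (show progress pr x y (stateOf κ (List.ofFn r)).1 ≤ 4 * n - 1 by omega) hamp
    simp only [amp, simLength] at this hΦ
    push_cast at hΦ
    nlinarith
  have hshape : FlagShape pr x y (stateOf κ (List.ofFn r)).1 :=
    flagShape_foldl_receive _ flagShape_nil
  exact hshape.take_reverse_eq_transcript (by omega)

theorem simLength_le {κ : ℕ} (n : ℕ) {ε : ℝ} (hε : 0 < ε) (hε3 : ε < 1 / 3)
    (hκε : 3 * κ * ε ≤ 2) : (simLength κ n : ℝ) ≤ 20 * n / ε ^ 2 := by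
  have hκ : (0 : ℝ) ≤ κ := κ.cast_nonneg
  have key : (36 * κ ^ 2 + 12 * κ) * ε ^ 2 ≤ 20 := by
    nlinarith [mul_le_mul_of_nonneg_left hε3.le (mul_nonneg hκ hε.le)]
  rw [le_div_iff₀ (by positivity), simLength]
  push_cast
  nlinarith [mul_le_mul_of_nonneg_left key (n.cast_nonneg : (0 : ℝ) ≤ n)]

theorem exists_nat_three_mul_mul_mem_Icc {ε : ℝ} (hε : 0 < ε) (hε3 : ε < 1 / 3) :
    ∃ κ : ℕ, 3 * κ * ε ∈ Set.Icc 1 2 := by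
  refine ⟨⌈1 / (3 * ε)⌉₊, ?_, ?_⟩
  · have := Nat.le_ceil (1 / (3 * ε))
    rw [div_le_iff₀ (by positivity)] at this
    linarith
  · have := Nat.ceil_lt_add_one (by positivity : 0 ≤ 1 / (3 * ε))
    rw [div_add_one (by positivity), lt_div_iff₀ (by positivity)] at this
    linarith

end FeedbackSimulation

/-- For every ε with 0 < ε < 1/3 and every noiseless alternating binary
protocol π of length n, there is a deterministic robust feedback protocol over the
binary alphabet (the order of speaking may depend on the noise via the jointly known
received bits), of length N ≤ c·n/ε² for an absolute constant c > 0, such that for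
every input pair and every noise pattern with at most (1/3 − ε)·N corrupted rounds
(bit flips), both parties output the transcript π(x,y). -/
theorem feedback_arbitrary_order_binary :
    ∃ c : ℝ, 0 < c ∧
      ∀ (X Y : Type) (pr : AltProtocol X Y) (n : ℕ) (ε : ℝ),
        0 < ε → ε < 1/3 →
        ∃ (N : ℕ) (P : FeedbackProtocol Bool X Y (List Bool) N),
          (N : ℝ) ≤ c * n / ε ^ 2 ∧
          ∀ (x : X) (y : Y) (r : Fin N → Bool),
            (P.corruptions x y r : ℝ) ≤ (1/3 - ε) * N →
            P.outA x (List.ofFn r) = pr.transcript x y n ∧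
            P.outB y (List.ofFn r) = pr.transcript x y n := by
  refine ⟨20, by norm_num, fun X Y pr n ε hε hε3 => ?_⟩
  obtain ⟨κ, hκε, hκε'⟩ := FeedbackSimulation.exists_nat_three_mul_mul_mem_Icc hε hε3
  have hκ : 1 ≤ κ := Nat.one_le_iff_ne_zero.mpr fun h => by norm_num [h] at hκε
  refine ⟨FeedbackSimulation.simLength κ n, FeedbackSimulation.simProtocol pr n κ _,
    FeedbackSimulation.simLength_le n hε hε3 hκε', fun x y r hr => ?_⟩
  have hout := FeedbackSimulation.simProtocol_output hκ hε hκε r hr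
  exact ⟨hout, hout⟩
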